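/- arXiv:2505.17531 — 4 statements merged into one kernel-verified Lean document; each statement's English description precedes it below -/
import Mathlib

section
/- There is no binary linear code of effective length 1 all of whose nonzero codewords have weight divisible by 4, other than the zero code of length 0; equivalently, a nonzero 4-divisible binary linear code of full length has length at least 4. Consequently, an 8-divisible binary linear code of length 65 and minimum distance ≥ 24 contains no codeword of weight 64. -/
open Finset

/-- Hamming weight of a binary word. -/
def wt {n : ℕ} (x : Fin n → ZMod 2) : ℕ := hammingNorm x

/-- The dual code of a binary linear code. -/
def dualCode {n : ℕ} (C : Submodule (ZMod 2) (Fin n → ZMod 2)) :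
    Submodule (ZMod 2) (Fin n → ZMod 2) where
  carrier := {x | ∀ c ∈ C, ∑ i, x i * c i = 0}
  zero_mem' := by intro c _; simp
  add_mem' := by
    intro a b ha hb c hc
    have h : ∑ i, (a + b) i * c i = (∑ i, a i * c i) + ∑ i, b i * c i := by
      rw [← Finset.sum_add_distrib]
      exact Finset.sum_congr rfl fun i _ => by simp [add_mul]
    simp only [Set.mem_setOf_eq] at *
    rw [h, ha c hc, hb c hc, add_zero]
  smul_mem' := by
    intro r a ha c hc
    have h : ∑ i, (r • a) i * c i = r * ∑ i, a i * c i := by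
      rw [Finset.mul_sum]
      exact Finset.sum_congr rfl fun i _ => by simp [mul_assoc]
    simp only [Set.mem_setOf_eq] at *
    rw [h, ha c hc, mul_zero]

/-- A code has full (effective) length if every coordinate is in the support of
some codeword. -/
def FullLength {n : ℕ} (C : Submodule (ZMod 2) (Fin n → ZMod 2)) : Prop :=
  ∀ i : Fin n, ∃ c ∈ C, c i ≠ 0

/-- The weight distribution: `wd C i` is the number of codewords of `C` of weight `i`. -/
noncomputable def wd {n : ℕ} (C : Submodule (ZMod 2) (Fin n → ZMod 2)) (i : ℕ) : ℕ :=
  Nat.card {c : Fin n → ZMod 2 // c ∈ C ∧ wt c = i}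

variable {n : ℕ}

lemma wt_eq_card (x : Fin n → ZMod 2) : wt x = #{i | x i ≠ 0} := rfl

lemma wt_le_length (x : Fin n → ZMod 2) : wt x ≤ n := by
  simpa [wt_eq_card] using card_filter_le univ fun i => x i ≠ 0

lemma card_zero_set_add_wt (x : Fin n → ZMod 2) : #{i | x i = 0} + wt x = n := by
  simpa [wt_eq_card] using card_filter_add_card_filter_not (s := univ) (p := fun i => x i = 0)

/-- Coordinatewise `[d ≠ 0] + [c + d ≠ 0] = [c ≠ 0] + 2 [c = 0 ∧ d ≠ 0]` over `𝔽₂`. -/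
lemma wt_add_wt_add (c d : Fin n → ZMod 2) :
    wt d + wt (c + d) = wt c + 2 * #{i | c i = 0 ∧ d i ≠ 0} := by
  simp only [wt_eq_card, card_filter, mul_sum, ← sum_add_distrib]
  refine sum_congr rfl fun i _ => ?_
  rw [Pi.add_apply]
  generalize c i = a
  generalize d i = b
  revert a b
  decide

/-- `#{i | c i = 0 ∧ d i ≠ 0}` is the weight of the image of `d` in the residual code `Res(C; c)`:
a `2Δ`-divisible code has `Δ`-divisible residual codes. -/
lemma dvd_card_residual_support {C : Submodule (ZMod 2) (Fin n → ZMod 2)} {Δ : ℕ}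
    (hdiv : ∀ c ∈ C, 2 * Δ ∣ wt c) {c d : Fin n → ZMod 2} (hc : c ∈ C) (hd : d ∈ C) :
    Δ ∣ #{i | c i = 0 ∧ d i ≠ 0} := by
  have hsum : 2 * Δ ∣ wt c + 2 * #{i | c i = 0 ∧ d i ≠ 0} :=
    wt_add_wt_add c d ▸ dvd_add (hdiv d hd) (hdiv (c + d) (C.add_mem hc hd))
  exact Nat.dvd_of_mul_dvd_mul_left two_pos ((Nat.dvd_add_right (hdiv c hc)).mp hsum)

lemma le_length_of_dvd_wt {C : Submodule (ZMod 2) (Fin n → ZMod 2)} {Δ : ℕ} (hC : C ≠ ⊥)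
    (hdiv : ∀ c ∈ C, Δ ∣ wt c) : Δ ≤ n := by
  obtain ⟨c, hc, hc0⟩ := Submodule.exists_mem_ne_zero_of_ne_bot hC
  have hpos : 0 < wt c := hammingNorm_pos_iff.mpr hc0
  exact (Nat.le_of_dvd hpos (hdiv c hc)).trans (wt_le_length c)

/-- `Res(C; c)` lives on the `n - wt c` zero coordinates of `c`, and full length of `C` makes it
nonzero, so its nonzero weights, multiples of `Δ`, fit into `n - wt c`. -/
lemma FullLength.wt_add_le_length {C : Submodule (ZMod 2) (Fin n → ZMod 2)} (hC : FullLength C)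
    {Δ : ℕ} (hdiv : ∀ c ∈ C, 2 * Δ ∣ wt c) {c : Fin n → ZMod 2} (hc : c ∈ C) (hcn : wt c ≠ n) :
    wt c + Δ ≤ n := by
  obtain ⟨i₀, hi₀⟩ : ∃ i₀, c i₀ = 0 := by
    by_contra! h
    exact hcn (by simp [wt_eq_card, h])
  obtain ⟨d, hd, hdi₀⟩ := hC i₀
  have hpos : 0 < #{i | c i = 0 ∧ d i ≠ 0} := card_pos.mpr ⟨i₀, by simp [hi₀, hdi₀]⟩
  have hle : #{i | c i = 0 ∧ d i ≠ 0} ≤ #{i | c i = 0} :=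
    card_le_card fun i hi => by simp_all
  have hΔ := Nat.le_of_dvd hpos (dvd_card_residual_support hdiv hc hd)
  have hzero := card_zero_set_add_wt c
  omega

theorem stmt6 :
    (∀ (m : ℕ) (C : Submodule (ZMod 2) (Fin m → ZMod 2)),
      FullLength C → (∀ c ∈ C, 4 ∣ wt c) → C ≠ ⊥ → 4 ≤ m) ∧
    (∀ C : Submodule (ZMod 2) (Fin 65 → ZMod 2),
      FullLength C → (∀ c ∈ C, 8 ∣ wt c) → (∀ c ∈ C, c ≠ 0 → 24 ≤ wt c) →
      ∀ c ∈ C, wt c ≠ 64) := by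
  refine ⟨fun m C _ hdiv hC => le_length_of_dvd_wt hC hdiv, fun C hC hdiv _ c hc hw => ?_⟩
  have hres : wt c + 4 ≤ 65 := hC.wt_add_le_length (Δ := 4) hdiv hc (by omega)
  omega
end

section
/- Let C be an 8-divisible binary linear code of full effective length n ≤ 65, dimension 12, and minimum distance ≥ 24, with weight distribution (a_i) and dual weight distribution (a_i^*). If C has no codewords of weight 56 or 64 beyond those counted, then a_40 = (205/2)n² − 6808n − (1/2)n³ + (208 − 3n)a_2^* + 3a_3^* + 6a_56 + 20a_64 + 147420. -/
open Finset

/-!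
Write `ε(c) ∈ {±1}ⁿ` for the vector `((-1)^{c_i})_i`. For `s ⊆ [n]`, the map
`c ↦ ∏_{i ∈ s} (-1)^{c_i}` is a character of `C`, trivial exactly when the indicator word of `s`
lies in `C^⊥`; summing over `C` and over all `s` of size `m` gives
`∑_{c ∈ C} e_m(ε(c)) = |C| · a_m^*` (the MacWilliams identity, `e_m(ε(c))` being the Krawtchouk
value at `wt c`). Since `ε(c)_i² = 1`, Newton's identities express `e_1, e_2, e_3` of `ε(c)` through
`∑ ε(c)_i = n - 2 wt c`; with `a_1^* = 0` (full length) this yields the first Pless power moments.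
For the codes at hand all weights lie in `{0, 24, 32, 40, 48, 56, 64}`, so the moments of order
`0, …, 3` are four linear equations in `a_24, …, a_64`; eliminating `a_24, a_32, a_48` gives `a_40`.
-/

open MvPolynomial

section Newton

variable {σ R : Type*} [Fintype σ] [CommRing R] (x : σ → R)

lemma eval_esymm_eq_sum_prod (k : ℕ) :
    eval x (esymm σ R k) = ∑ t ∈ univ.powersetCard k, ∏ i ∈ t, x i := by
  simp [esymm]

lemma eval_esymm_one : eval x (esymm σ R 1) = ∑ i, x i := by
  simp [esymm, powersetCard_one]

lemma eval_psum_eq_sum_pow (k : ℕ) : eval x (psum σ R k) = ∑ i, x i ^ k := by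
  simp [psum]

variable {x}

theorem two_mul_eval_esymm_two_of_sq_eq_one (hx : ∀ i, x i ^ 2 = 1) :
    2 * eval x (esymm σ R 2) = (∑ i, x i) ^ 2 - Fintype.card σ := by
  have newton := congrArg (eval x) (mul_esymm_eq_sum σ R 2)
  rw [show {a ∈ antidiagonal 2 | a.1 < 2} = {(0, 2), (1, 1)} by decide, sum_pair (by decide)]
    at newton
  simp only [map_mul, map_add, map_pow, map_neg, map_one, map_natCast, esymm_zero, pow_one,
    eval_esymm_one, eval_psum_eq_sum_pow, hx, sum_const, card_univ, nsmul_eq_mul] at newton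
  linear_combination newton

theorem six_mul_eval_esymm_three_of_sq_eq_one (hx : ∀ i, x i ^ 2 = 1) :
    6 * eval x (esymm σ R 3) = (∑ i, x i) ^ 3 - (3 * Fintype.card σ - 2) * ∑ i, x i := by
  have hx3 (i : σ) : x i ^ 3 = x i := by rw [pow_succ, hx, one_mul]
  have newton := congrArg (eval x) (mul_esymm_eq_sum σ R 3)
  rw [show {a ∈ antidiagonal 3 | a.1 < 3} = {(0, 3), (1, 2), (2, 1)} by decide,
    sum_insert (by decide), sum_pair (by decide)] at newton
  simp only [map_mul, map_add, map_pow, map_neg, map_one, map_natCast, esymm_zero, pow_one,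
    eval_esymm_one, eval_psum_eq_sum_pow, hx, hx3, sum_const, card_univ, nsmul_eq_mul] at newton
  linear_combination 2 * newton + (∑ i, x i) * two_mul_eval_esymm_two_of_sq_eq_one hx

end Newton

lemma AddChar.map_sum_eq_prod {ι A M : Type*} [AddCommMonoid A] [CommMonoid M]
    (ψ : AddChar A M) (s : Finset ι) (f : ι → A) : ψ (∑ i ∈ s, f i) = ∏ i ∈ s, ψ (f i) := by
  induction s using Finset.cons_induction with
  | empty => simp
  | cons a s ha ih => rw [sum_cons, ψ.map_add_eq_mul, ih, prod_cons]

def signChar : AddChar (ZMod 2) ℚ := AddChar.zmodChar 2 (ζ := -1) (by norm_num)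

lemma signChar_eq_ite (a : ZMod 2) : signChar a = if a = 0 then 1 else -1 := by
  rw [signChar, AddChar.zmodChar_apply]
  fin_cases a <;> rfl

lemma signChar_eq_one_iff {a : ZMod 2} : signChar a = 1 ↔ a = 0 := by
  rw [signChar_eq_ite]; split_ifs <;> norm_num [*]

lemma signChar_sq (a : ZMod 2) : signChar a ^ 2 = 1 := by
  rw [signChar_eq_ite]; split_ifs <;> norm_num

section Code

variable {n : ℕ}

lemma sum_signChar_eq_sub_two_mul_wt (x : Fin n → ZMod 2) :
    ∑ i, signChar (x i) = n - 2 * wt x := by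
  have hsplit := card_filter_add_card_filter_not (s := univ) (fun i => x i = 0)
  simp only [card_univ, Fintype.card_fin] at hsplit
  qify at hsplit
  simp only [signChar_eq_ite, sum_ite, sum_const, nsmul_eq_mul, wt, hammingNorm]
  linear_combination hsplit

def supportEquiv : (Fin n → ZMod 2) ≃ Finset (Fin n) where
  toFun x := univ.filter (x · ≠ 0)
  invFun s i := if i ∈ s then 1 else 0
  left_inv x := by
    funext i
    simp only [mem_filter, mem_univ, true_and]
    split_ifs with h
    · exact (Fin.eq_one_of_ne_zero _ h).symm
    · exact (not_not.mp h).symm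
  right_inv s := by ext i; simp

lemma card_supportEquiv (x : Fin n → ZMod 2) : (supportEquiv x).card = wt x := rfl

lemma sum_supportEquiv_symm_mul (s : Finset (Fin n)) (c : Fin n → ZMod 2) :
    ∑ i, supportEquiv.symm s i * c i = ∑ i ∈ s, c i := by
  simp [supportEquiv, ite_mul, sum_ite_mem]

lemma wd_eq_card_filter_powersetCard (D : Submodule (ZMod 2) (Fin n → ZMod 2)) (m : ℕ)
    [DecidablePred (· ∈ D)] :
    wd D m = #{s ∈ univ.powersetCard m | supportEquiv.symm s ∈ D} := by
  rw [wd, ← Nat.card_eq_finsetCard]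
  exact Nat.card_congr <| supportEquiv.subtypeEquiv fun x => by
    simp [card_supportEquiv, and_comm]

lemma wd_zero (C : Submodule (ZMod 2) (Fin n → ZMod 2)) : wd C 0 = 1 := by
  rw [wd, Nat.card_eq_one_iff_unique]
  refine ⟨⟨fun a b => Subtype.ext ?_⟩, ⟨⟨0, C.zero_mem, by simp [wt]⟩⟩⟩
  rw [hammingNorm_eq_zero.mp a.2.2, hammingNorm_eq_zero.mp b.2.2]

variable (C : Submodule (ZMod 2) (Fin n → ZMod 2))

def coordSum (s : Finset (Fin n)) : C →+ ZMod 2 where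
  toFun c := ∑ i ∈ s, (c : Fin n → ZMod 2) i
  map_zero' := by simp
  map_add' a b := by simp [sum_add_distrib]

open scoped Classical in
lemma sum_prod_signChar_eq_ite [Fintype C] (s : Finset (Fin n)) :
    ∑ c : C, ∏ i ∈ s, signChar ((c : Fin n → ZMod 2) i) =
      if supportEquiv.symm s ∈ dualCode C then (Fintype.card C : ℚ) else 0 := by
  set ψ := signChar.compAddMonoidHom (coordSum C s)
  have hψ : ψ = 0 ↔ supportEquiv.symm s ∈ dualCode C := by
    simp [ψ, AddChar.eq_zero_iff, coordSum, signChar_eq_one_iff, dualCode,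
      sum_supportEquiv_symm_mul]
  calc ∑ c : C, ∏ i ∈ s, signChar ((c : Fin n → ZMod 2) i) = ∑ c, ψ c := by
        simp [ψ, coordSum, AddChar.map_sum_eq_prod]
    _ = _ := by rw [AddChar.sum_eq_ite ψ]; exact if_congr hψ rfl rfl

theorem sum_eval_esymm_signChar [Fintype C] (m : ℕ) :
    ∑ c : C, eval (fun i => signChar ((c : Fin n → ZMod 2) i)) (esymm (Fin n) ℚ m)
      = Fintype.card C * wd (dualCode C) m := by
  classical
  simp_rw [eval_esymm_eq_sum_prod]
  rw [sum_comm]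
  simp_rw [sum_prod_signChar_eq_ite, sum_ite, sum_const_zero, sum_const, add_zero, nsmul_eq_mul,
    wd_eq_card_filter_powersetCard]
  ring

variable {C}

lemma wd_dualCode_one_eq_zero (hfull : FullLength C) : wd (dualCode C) 1 = 0 := by
  classical
  rw [wd_eq_card_filter_powersetCard, card_eq_zero, filter_eq_empty_iff]
  intro s hs hdual
  obtain ⟨i, rfl⟩ := card_eq_one.mp (mem_powersetCard.mp hs).2
  obtain ⟨c, hc, hci⟩ := hfull i
  simpa [sum_supportEquiv_symm_mul, hci] using hdual c hc

variable [Fintype C]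

theorem two_mul_sum_wt (hfull : FullLength C) :
    2 * ∑ c : C, (wt (c : Fin n → ZMod 2) : ℚ) = Fintype.card C * n := by
  have h := sum_eval_esymm_signChar C 1
  simp only [eval_esymm_one, sum_signChar_eq_sub_two_mul_wt, wd_dualCode_one_eq_zero hfull,
    sum_sub_distrib, sum_const, card_univ, nsmul_eq_mul, ← mul_sum] at h
  linear_combination -h

theorem four_mul_sum_wt_sq (hfull : FullLength C) :
    4 * ∑ c : C, (wt (c : Fin n → ZMod 2) : ℚ) ^ 2
      = Fintype.card C * (n ^ 2 + n + 2 * wd (dualCode C) 2) := by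
  have key (c : C) : eval (fun i => signChar ((c : Fin n → ZMod 2) i)) (esymm (Fin n) ℚ 2)
      = (n ^ 2 - n) / 2 - 2 * n * wt (c : Fin n → ZMod 2) + 2 * wt (c : Fin n → ZMod 2) ^ 2 := by
    have := two_mul_eval_esymm_two_of_sq_eq_one fun i => signChar_sq ((c : Fin n → ZMod 2) i)
    rw [sum_signChar_eq_sub_two_mul_wt, Fintype.card_fin] at this
    linear_combination this / 2
  have h := sum_eval_esymm_signChar C 2
  simp only [key, sum_add_distrib, sum_sub_distrib, sum_const, card_univ, nsmul_eq_mul,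
    ← mul_sum] at h
  linear_combination 2 * h + 2 * n * two_mul_sum_wt hfull

theorem eight_mul_sum_wt_cube (hfull : FullLength C) :
    8 * ∑ c : C, (wt (c : Fin n → ZMod 2) : ℚ) ^ 3 = Fintype.card C *
      (n ^ 3 + 3 * n ^ 2 + 6 * n * wd (dualCode C) 2 - 6 * wd (dualCode C) 3) := by
  have key (c : C) : eval (fun i => signChar ((c : Fin n → ZMod 2) i)) (esymm (Fin n) ℚ 3)
      = (n ^ 3 - 3 * n ^ 2 + 2 * n) / 6 + (6 * n - 4 - 6 * n ^ 2) / 6 * wt (c : Fin n → ZMod 2)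
        + 2 * n * wt (c : Fin n → ZMod 2) ^ 2 - 4 / 3 * wt (c : Fin n → ZMod 2) ^ 3 := by
    have := six_mul_eval_esymm_three_of_sq_eq_one fun i => signChar_sq ((c : Fin n → ZMod 2) i)
    rw [sum_signChar_eq_sub_two_mul_wt, Fintype.card_fin] at this
    linear_combination this / 6
  have h := sum_eval_esymm_signChar C 3
  simp only [key, sum_add_distrib, sum_sub_distrib, sum_const, card_univ, nsmul_eq_mul,
    ← mul_sum] at h
  linear_combination -6 * h + 3 * n * four_mul_sum_wt_sq hfull
    + (3 * n - 2 - 3 * n ^ 2) * two_mul_sum_wt hfull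

lemma wd_eq_card_filter_wt (w : ℕ) [DecidablePred fun c : C => wt (c : Fin n → ZMod 2) = w] :
    wd C w = #{c : C | wt (c : Fin n → ZMod 2) = w} := by
  rw [wd, ← Fintype.card_subtype, ← Nat.card_eq_fintype_card]
  exact Nat.card_congr (Equiv.subtypeSubtypeEquivSubtypeInter _ _).symm

lemma sum_comp_wt_eq_sum_wd (W : Finset ℕ) (hW : ∀ c ∈ C, wt c ∈ W) (f : ℕ → ℚ) :
    ∑ c : C, f (wt (c : Fin n → ZMod 2)) = ∑ w ∈ W, wd C w * f w := by
  classical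
  rw [← sum_fiberwise_of_maps_to (g := fun c : C => wt (c : Fin n → ZMod 2))
    fun c _ => hW c c.2]
  refine sum_congr rfl fun w _ => ?_
  rw [sum_congr rfl fun c hc => by rw [(mem_filter.mp hc).2], sum_const, nsmul_eq_mul,
    wd_eq_card_filter_wt]

end Code

lemma wt_mem_of_eight_dvd {n : ℕ} {x : Fin n → ZMod 2} (hn : n ≤ 65) (h8 : 8 ∣ wt x)
    (h24 : x ≠ 0 → 24 ≤ wt x) : wt x ∈ ({0, 24, 32, 40, 48, 56, 64} : Finset ℕ) := by
  have hle : wt x ≤ 65 := hammingNorm_le_card_fintype.trans (by simpa using hn)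
  by_cases h0 : x = 0
  · simp [h0, wt]
  · have := h24 h0
    simp only [mem_insert, mem_singleton]
    omega

theorem stmt8 {n : ℕ} (hn : n ≤ 65) (C : Submodule (ZMod 2) (Fin n → ZMod 2))
    (hk : Module.finrank (ZMod 2) C = 12) (hfull : FullLength C)
    (hdiv : ∀ c ∈ C, 8 ∣ wt c) (hd : ∀ c ∈ C, c ≠ 0 → 24 ≤ wt c) :
    (wd C 40 : ℚ) = 205 / 2 * n ^ 2 - 6808 * n - 1 / 2 * n ^ 3
      + (208 - 3 * n) * wd (dualCode C) 2 + 3 * wd (dualCode C) 3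
      + 6 * wd C 56 + 20 * wd C 64 + 147420 := by
  classical
  have hW (c) (hc : c ∈ C) := wt_mem_of_eight_dvd hn (hdiv c hc) (hd c hc)
  have hK : (Fintype.card C : ℚ) = 4096 := by
    rw [Module.card_eq_pow_finrank (K := ZMod 2), hk]; norm_num
  have E0 := sum_comp_wt_eq_sum_wd _ hW fun _ => 1
  have E1 := two_mul_sum_wt hfull
  have E2 := four_mul_sum_wt_sq hfull
  have E3 := eight_mul_sum_wt_cube hfull
  rw [sum_comp_wt_eq_sum_wd _ hW fun w => (w : ℚ)] at E1
  rw [sum_comp_wt_eq_sum_wd _ hW fun w => (w : ℚ) ^ 2] at E2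
  rw [sum_comp_wt_eq_sum_wd _ hW fun w => (w : ℚ) ^ 3] at E3
  simp only [sum_insert, sum_singleton, mem_insert, mem_singleton, Nat.reduceEqDiff, or_self,
    not_false_eq_true, wd_zero, sum_const, card_univ, nsmul_eq_mul, hK] at E0 E1 E2 E3
  linear_combination (-1 / 8192 : ℚ) * E3 + (13 / 512 : ℚ) * E2 - (27 / 16 : ℚ) * E1 - 36 * E0
end

section
/- Every 4-divisible binary linear code of dimension 11 and full length has effective length at least 23. Consequently, if C is an 8-divisible binary [n,12,≥24] code of full length with n ≤ 65 containing a codeword of weight 40, then n ≥ 63. -/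
open Finset

/-!
A doubly-even binary code is self-orthogonal, so in dimension 11 its length is at least 22; at
length exactly 22 it would be self-dual, hence contain the all-ones word, of weight 22 ≢ 0 mod 4.

For the second claim, restrict the code `C` to the zero set of a weight-40 codeword `c`. A codeword
`x ∉ {0, c}` vanishing off `supp c` would give `wt x + wt (x + c) = 40 < 2 · 24`, so the restriction
has kernel `{0, c}` and the residual code has dimension 11. Since
`2 |supp x ∩ supp c| = wt x + wt c - wt (x + c) ≡ 0 mod 8`, the residual code is doubly even,
hence `n - 40 ≥ 23`.
-/

open Module Matrix

section Orthogonal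

variable {K ι : Type*} [Field K] [Fintype ι]

def orthogonalCode (D : Submodule K (ι → K)) : Submodule K (ι → K) :=
  LinearMap.BilinForm.orthogonal (dotProductBilin K K) D

theorem mem_orthogonalCode {D : Submodule K (ι → K)} {x : ι → K} :
    x ∈ orthogonalCode D ↔ ∀ c ∈ D, c ⬝ᵥ x = 0 := Iff.rfl

theorem finrank_add_finrank_orthogonalCode (D : Submodule K (ι → K)) :
    finrank K D + finrank K (orthogonalCode D) = Fintype.card ι := by
  classical
  have hker : LinearMap.ker (dotProductBilin K K : LinearMap.BilinForm K (ι → K)) = ⊥ := by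
    refine LinearMap.ker_eq_bot'.mpr fun x hx => funext fun i => ?_
    simpa using LinearMap.congr_fun hx (Pi.single i 1)
  rw [orthogonalCode, LinearMap.BilinForm.finrank_add_finrank_orthogonal', hker, inf_bot_eq,
    finrank_bot, add_zero, finrank_fintype_fun_eq_card]

theorem two_mul_finrank_le_card_of_le_orthogonalCode {D : Submodule K (ι → K)}
    (hD : D ≤ orthogonalCode D) : 2 * finrank K D ≤ Fintype.card ι := by
  have := Submodule.finrank_mono hD
  have := finrank_add_finrank_orthogonalCode D
  omega

theorem eq_orthogonalCode_of_two_mul_finrank_eq {D : Submodule K (ι → K)}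
    (hD : D ≤ orthogonalCode D) (hdim : 2 * finrank K D = Fintype.card ι) :
    D = orthogonalCode D := by
  refine Submodule.eq_of_le_of_finrank_le hD ?_
  have := finrank_add_finrank_orthogonalCode D
  omega

end Orthogonal

section Binary

variable {ι : Type*} [Fintype ι] {D : Submodule (ZMod 2) (ι → ZMod 2)}

theorem hammingNorm_add_hammingNorm (x y : ι → ZMod 2) :
    hammingNorm x + hammingNorm y = hammingNorm (x + y) + 2 * #{j | x j ≠ 0 ∧ y j ≠ 0} := by
  simp only [hammingNorm, card_filter, mul_sum, ← sum_add_distrib, Pi.add_apply]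
  refine sum_congr rfl fun j _ => ?_
  generalize x j = a, y j = b
  fin_cases a <;> fin_cases b <;> rfl

theorem dotProduct_eq_zero_iff_two_dvd (x y : ι → ZMod 2) :
    x ⬝ᵥ y = 0 ↔ 2 ∣ #{j | x j ≠ 0 ∧ y j ≠ 0} := by
  have hcast : x ⬝ᵥ y = (#{j | x j ≠ 0 ∧ y j ≠ 0} : ZMod 2) := by
    simp only [dotProduct, card_filter, Nat.cast_sum]
    refine sum_congr rfl fun j _ => ?_
    generalize x j = a, y j = b
    fin_cases a <;> fin_cases b <;> rfl
  rw [hcast, ZMod.natCast_eq_zero_iff]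

theorem le_orthogonalCode_of_four_dvd (hD : ∀ c ∈ D, 4 ∣ hammingNorm c) :
    D ≤ orthogonalCode D := by
  intro x hx
  refine mem_orthogonalCode.mpr fun c hc => (dotProduct_eq_zero_iff_two_dvd c x).mpr ?_
  have := hammingNorm_add_hammingNorm c x
  have := hD _ (D.add_mem hc hx)
  have := hD c hc
  have := hD x hx
  omega

theorem one_mem_orthogonalCode_of_two_dvd (hD : ∀ c ∈ D, 2 ∣ hammingNorm c) :
    1 ∈ orthogonalCode D := by
  refine mem_orthogonalCode.mpr fun c hc => (dotProduct_eq_zero_iff_two_dvd c 1).mpr ?_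
  simpa [hammingNorm] using hD c hc

theorem four_dvd_card_of_two_mul_finrank_eq (hD : ∀ c ∈ D, 4 ∣ hammingNorm c)
    (hdim : 2 * finrank (ZMod 2) D = Fintype.card ι) : 4 ∣ Fintype.card ι := by
  have hself := eq_orthogonalCode_of_two_mul_finrank_eq (le_orthogonalCode_of_four_dvd hD) hdim
  have hone : (1 : ι → ZMod 2) ∈ D :=
    hself ▸ one_mem_orthogonalCode_of_two_dvd fun c hc => dvd_trans (by norm_num) (hD c hc)
  simpa [hammingNorm] using hD 1 hone

theorem twentyThree_le_card_of_finrank_eq_eleven (hdim : finrank (ZMod 2) D = 11)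
    (hD : ∀ c ∈ D, 4 ∣ hammingNorm c) : 23 ≤ Fintype.card ι := by
  have hle := two_mul_finrank_le_card_of_le_orthogonalCode (le_orthogonalCode_of_four_dvd hD)
  have hne : 2 * finrank (ZMod 2) D ≠ Fintype.card ι := fun h => by
    have := four_dvd_card_of_two_mul_finrank_eq hD h
    omega
  omega

end Binary

section Residual

variable {ι : Type*} [Fintype ι]

theorem hammingNorm_eq_card_add_hammingNorm_restrict {β : Type*} [Zero β] [DecidableEq β]
    (x c : ι → β) :
    hammingNorm x = #{j | x j ≠ 0 ∧ c j ≠ 0} + hammingNorm fun j : {j // c j = 0} => x j := by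
  have hres : hammingNorm (fun j : {j // c j = 0} => x j) = #{j | x j ≠ 0 ∧ c j = 0} := by
    rw [hammingNorm, ← card_map (Function.Embedding.subtype _)]
    congr 1
    ext j
    simp [and_comm]
  rw [hres, hammingNorm, ← card_filter_add_card_filter_not (fun j => c j ≠ 0), filter_filter,
    filter_filter]
  simp only [not_not]

theorem card_zeros_add_hammingNorm {β : Type*} [Zero β] [DecidableEq β] (c : ι → β) :
    Fintype.card {j // c j = 0} + hammingNorm c = Fintype.card ι := by
  rw [Fintype.card_subtype, hammingNorm, card_filter_add_card_filter_not, card_univ]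

def residualCode {K : Type*} [Field K] (C : Submodule K (ι → K)) (c : ι → K) :
    Submodule K ({j // c j = 0} → K) :=
  C.map (LinearMap.funLeft K K Subtype.val)

variable {C : Submodule (ZMod 2) (ι → ZMod 2)} {c : ι → ZMod 2}

theorem four_dvd_hammingNorm_of_mem_residualCode (hC : ∀ x ∈ C, 8 ∣ hammingNorm x)
    (hc : c ∈ C) :
    ∀ d ∈ residualCode C c, 4 ∣ hammingNorm d := by
  rintro _ ⟨x, hx, rfl⟩
  have := hammingNorm_add_hammingNorm x c
  have := hammingNorm_eq_card_add_hammingNorm_restrict x c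
  have := hC x hx
  have := hC c hc
  have := hC _ (C.add_mem hx hc)
  change 4 ∣ hammingNorm fun j : {j // c j = 0} => x j
  omega

theorem eq_zero_or_eq_of_support_subset {d : ℕ} (hmin : ∀ x ∈ C, x ≠ 0 → d ≤ hammingNorm x)
    (hc : c ∈ C) (hwc : hammingNorm c < 2 * d) {x : ι → ZMod 2} (hx : x ∈ C)
    (hxc : ∀ j, c j = 0 → x j = 0) :
    x = 0 ∨ x = c := by
  by_contra! h
  have hxc' : x + c ≠ 0 := fun h0 =>
    h.2 (funext fun j => CharTwo.add_eq_zero.mp (congrFun h0 j))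
  have hsum := hammingNorm_add_hammingNorm x c
  have hinter : hammingNorm x = #{j | x j ≠ 0 ∧ c j ≠ 0} := by
    have hres : (fun j : {j // c j = 0} => x j) = 0 := funext fun j => hxc j j.2
    simpa [hres] using hammingNorm_eq_card_add_hammingNorm_restrict x c
  have := hmin x hx h.1
  have := hmin _ (C.add_mem hx hc) hxc'
  omega

theorem finrank_residualCode_add_one {d : ℕ} (hmin : ∀ x ∈ C, x ≠ 0 → d ≤ hammingNorm x)
    (hc : c ∈ C) (hc0 : c ≠ 0) (hwc : hammingNorm c < 2 * d) :
    finrank (ZMod 2) (residualCode C c) + 1 = finrank (ZMod 2) C := by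
  set f := (LinearMap.funLeft (ZMod 2) (ZMod 2) (Subtype.val : {j // c j = 0} → ι)).comp
    C.subtype
  have hrange : LinearMap.range f = residualCode C c := by
    rw [LinearMap.range_comp, Submodule.range_subtype, residualCode]
  have hker : LinearMap.ker f = Submodule.span (ZMod 2) {⟨c, hc⟩} := by
    refine le_antisymm (fun x hx => ?_) ?_
    · have hxc : ∀ j, c j = 0 → (x : ι → ZMod 2) j = 0 := fun j hj =>
        congrFun (LinearMap.mem_ker.mp hx) ⟨j, hj⟩
      rcases eq_zero_or_eq_of_support_subset hmin hc hwc x.2 hxc with h0 | hcx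
      · rw [Submodule.coe_eq_zero.mp h0]
        exact zero_mem _
      · rw [(Subtype.ext hcx : x = ⟨c, hc⟩)]
        exact Submodule.mem_span_singleton_self _
    · rw [Submodule.span_le, Set.singleton_subset_iff, SetLike.mem_coe, LinearMap.mem_ker]
      exact funext fun j => j.2
  have hc0' : (⟨c, hc⟩ : C) ≠ 0 := fun h => hc0 (congrArg Subtype.val h)
  rw [← hrange, ← LinearMap.finrank_range_add_finrank_ker f, hker, finrank_span_singleton hc0']

end Residual

theorem stmt11 :
    (∀ (m : ℕ) (D : Submodule (ZMod 2) (Fin m → ZMod 2)),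
      Module.finrank (ZMod 2) D = 11 → FullLength D → (∀ c ∈ D, 4 ∣ wt c) →
      23 ≤ m) ∧
    (∀ (n : ℕ) (C : Submodule (ZMod 2) (Fin n → ZMod 2)), n ≤ 65 →
      Module.finrank (ZMod 2) C = 12 → FullLength C → (∀ c ∈ C, 8 ∣ wt c) →
      (∀ c ∈ C, c ≠ 0 → 24 ≤ wt c) → (∃ c ∈ C, wt c = 40) → 63 ≤ n) := by
  refine ⟨fun m D hD _ h4 => ?_, fun n C _ hC _ h8 hmin ⟨c, hc, hwc⟩ => ?_⟩
  · simpa using twentyThree_le_card_of_finrank_eq_eleven hD h4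
  · have hwc : hammingNorm c = 40 := hwc
    have hc0 : c ≠ 0 := by
      rintro rfl
      simp at hwc
    have hres := finrank_residualCode_add_one hmin hc hc0 (by omega : hammingNorm c < 2 * 24)
    have hlen := twentyThree_le_card_of_finrank_eq_eleven (by omega)
      (four_dvd_hammingNorm_of_mem_residualCode h8 hc)
    have hsplit := card_zeros_add_hammingNorm c
    rw [Fintype.card_fin] at hsplit
    omega
end

section
/- Let C be a binary linear code of length 56 whose nonzero codeword weights all lie in {24, 32, 56}. Then dim C ≤ 9. -/
open Finset

/-!
If `dim C ≥ 10`, pick a 10-dimensional subcode with generator matrix `G`; its 56 columns are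
points of `𝔽₂¹⁰`. The Walsh transform `W v = ∑ᵢ (-1)^⟪v, Gᵢ⟫ = 56 - 2 wt (v G)` satisfies
`W² = 64` on the codewords of weight 24 and 32 and `W² = 3136` on `0` and on the all-ones
word, and Fourier inversion of `W²` counts the ordered pairs of columns with `Gᵢ + Gⱼ = x`.
Without an all-ones codeword this count is 3 for every `x ≠ 0`, yet it is even because
`(i, j) ↦ (j, i)` has no fixed points. With one, the column multiplicities `m` satisfy
`∑ m = 56`, `∑ m² = 70` and `m p * m q ≤ 3` for distinct points, so at most one point is
repeated, say `t` times, and `t² - t = 14` has no solution.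
-/

open Matrix

lemma Submodule.exists_matrix_of_le_finrank {K ι : Type*} [Field K] {C : Submodule K (ι → K)}
    {k : ℕ} (hk : k ≤ Module.finrank K C) :
    ∃ G : Matrix (Fin k) ι K, (∀ v, v ᵥ* G ∈ C) ∧ Function.Injective G.vecMul := by
  obtain ⟨g, hg⟩ := exists_linearIndependent_of_le_finrank hk
  refine ⟨.of fun j => g j, fun v => ?_,
    vecMul_injective_iff.2 (hg.map' C.subtype C.ker_subtype)⟩
  rw [vecMul_eq_sum]
  exact C.sum_mem fun j _ => C.smul_mem _ (g j).2

namespace BinaryCode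

def chi (a : ZMod 2) : ℤ := if a = 0 then 1 else -1

lemma chi_add (a b : ZMod 2) : chi (a + b) = chi a * chi b := by decide +revert

lemma chi_zero : chi 0 = 1 := rfl

lemma sum_chi_eq_card_sub_two_mul_hammingNorm {ι : Type*} [Fintype ι] (c : ι → ZMod 2) :
    ∑ i, chi (c i) = Fintype.card ι - 2 * hammingNorm c := by
  have h : ∀ a : ZMod 2, chi a = 1 - 2 * if a ≠ 0 then 1 else 0 := by decide
  simp only [h, sum_sub_distrib, ← mul_sum, sum_boole, hammingNorm]
  simp

lemma sum_chi_dotProduct {κ : Type*} [Fintype κ] [DecidableEq κ] (y : κ → ZMod 2) :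
    ∑ v : κ → ZMod 2, chi (v ⬝ᵥ y) = if y = 0 then 2 ^ Fintype.card κ else 0 := by
  split_ifs with hy
  · simp [hy, chi_zero]
  · obtain ⟨t, ht⟩ : ∃ t, y t ≠ 0 := by
      by_contra! h
      exact hy (funext h)
    have hflip : ∀ a b : ZMod 2, b ≠ 0 → chi a + chi (a + b) = 0 := by decide
    refine sum_ninvolution (· + Pi.single t 1) (fun v => ?_) (fun v _ => ?_)
      (fun _ => mem_univ _) (fun v => by simp [add_assoc, ZModModule.add_self])
    · rw [add_dotProduct, single_dotProduct, one_mul]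
      exact hflip _ _ ht
    · simp

lemma eq_one_of_hammingNorm_eq_card {ι : Type*} [Fintype ι] {c : ι → ZMod 2}
    (hc : hammingNorm c = Fintype.card ι) : c = 1 := by
  rw [hammingNorm, ← card_univ, card_filter_eq_iff] at hc
  have hbin : ∀ a : ZMod 2, a ≠ 0 → a = 1 := by decide
  exact funext fun i => hbin _ (hc i (mem_univ i))

section Multiplicity

variable {ι A : Type*} [Fintype ι] [DecidableEq A]

def mult (B : ι → A) (p : A) : ℕ := #{i | B i = p}

lemma sum_mult [Fintype A] (B : ι → A) : ∑ p, mult B p = Fintype.card ι :=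
  (card_eq_sum_card_fiberwise fun i _ => mem_univ (B i)).symm

lemma mult_eq_zero_iff {B : ι → A} {p : A} : mult B p = 0 ↔ ∀ i, B i ≠ p := by
  simp [mult, filter_eq_empty_iff]

variable [AddCommGroup A]

def pairCount (B : ι → A) (x : A) : ℕ := #{r : ι × ι | B r.1 + B r.2 = x}

lemma two_mul_mult_mul_mult_le_pairCount (B : ι → A) {p q : A} (hpq : p ≠ q) :
    2 * (mult B p * mult B q) ≤ pairCount B (p + q) := by
  classical
  set P : Finset ι := {i | B i = p}
  set Q : Finset ι := {i | B i = q}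
  have hdisj : Disjoint (P ×ˢ Q) (Q ×ˢ P) := by
    simp only [disjoint_left, mem_product, P, Q, mem_filter]
    grind
  have hsub : P ×ˢ Q ∪ Q ×ˢ P ⊆ ({r : ι × ι | B r.1 + B r.2 = p + q} : Finset _) := by
    intro r
    simp only [mem_union, mem_product, P, Q, mem_filter, mem_univ,
      true_and]
    rintro (⟨h1, h2⟩ | ⟨h1, h2⟩) <;> simp [h1, h2, add_comm]
  calc 2 * (mult B p * mult B q) = #(P ×ˢ Q ∪ Q ×ˢ P) := by
        change 2 * (#P * #Q) = _
        rw [card_union_of_disjoint hdisj, card_product, card_product]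
        ring
    _ ≤ pairCount B (p + q) := card_le_card hsub

variable [Module (ZMod 2) A]

lemma pairCount_zero [Fintype A] (B : ι → A) : pairCount B 0 = ∑ p, mult B p ^ 2 := by
  rw [pairCount, card_eq_sum_card_fiberwise (f := fun r => B r.1) (t := univ)
    fun _ _ => mem_univ _]
  refine sum_congr rfl fun p _ => ?_
  rw [sq, mult, ← card_product, filter_filter]
  congr 1
  ext ⟨i, j⟩
  simp only [mem_filter, mem_univ, true_and, mem_product,
    ← ZModModule.sub_eq_add, sub_eq_zero]
  grind

lemma even_pairCount (B : ι → A) {x : A} (hx : x ≠ 0) : Even (pairCount B x) := by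
  rw [pairCount, ← ZMod.natCast_eq_zero_iff_even, card_filter, Nat.cast_sum]
  refine sum_ninvolution Prod.swap (fun r => ?_) (fun r hr hswap => ?_)
    (fun _ => mem_univ _) Prod.swap_swap
  · rw [Prod.fst_swap, Prod.snd_swap, add_comm (B r.2)]
    exact ZModModule.add_self _
  · have hdiag : r.2 = r.1 := congrArg Prod.fst hswap
    rw [hdiag, ZModModule.add_self, if_neg hx.symm] at hr
    exact hr Nat.cast_zero

end Multiplicity

section Walsh

variable {κ ι : Type*} [Fintype κ] [Fintype ι]

def walsh (G : Matrix κ ι (ZMod 2)) (v : κ → ZMod 2) : ℤ := ∑ i, chi ((v ᵥ* G) i)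

lemma walsh_eq (G : Matrix κ ι (ZMod 2)) (v : κ → ZMod 2) :
    walsh G v = Fintype.card ι - 2 * hammingNorm (v ᵥ* G) :=
  sum_chi_eq_card_sub_two_mul_hammingNorm _

lemma walsh_zero (G : Matrix κ ι (ZMod 2)) : walsh G 0 = Fintype.card ι := by
  simp [walsh_eq]

lemma walsh_of_vecMul_eq_one {G : Matrix κ ι (ZMod 2)} {v : κ → ZMod 2} (hv : v ᵥ* G = 1) :
    walsh G v = -Fintype.card ι := by
  simp only [walsh_eq, hv, hammingNorm, Pi.one_apply, one_ne_zero, ne_eq, not_false_eq_true,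
    filter_true, card_univ]
  ring

variable [DecidableEq κ]

theorem sum_walsh_sq_mul_chi (G : Matrix κ ι (ZMod 2)) (x : κ → ZMod 2) :
    ∑ v, walsh G v ^ 2 * chi (v ⬝ᵥ x) = 2 ^ Fintype.card κ * pairCount G.col x := by
  have hterm : ∀ v, walsh G v ^ 2 * chi (v ⬝ᵥ x)
      = ∑ r : ι × ι, chi (v ⬝ᵥ (G.col r.1 + G.col r.2 + x)) := by
    intro v
    rw [walsh, sq, sum_mul_sum, ← Fintype.sum_prod_type', sum_mul]
    refine sum_congr rfl fun r _ => ?_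
    rw [dotProduct_add, dotProduct_add, chi_add, chi_add]
    rfl
  simp only [hterm]
  rw [sum_comm]
  simp only [sum_chi_dotProduct, ← ZModModule.sub_eq_add _ x, sub_eq_zero, pairCount,
    card_filter, Nat.cast_sum, mul_sum]
  simp

end Walsh

lemma exists_sum_sq_add_eq_sum_add_sq {α : Type*} [Fintype α] [Nonempty α] (m : α → ℕ)
    (h : ∀ p q, p ≠ q → m p * m q ≤ 3) : ∃ t, ∑ p, m p ^ 2 + t = ∑ p, m p + t ^ 2 := by
  classical
  obtain ⟨p₀, -, hp₀⟩ := exists_max_image univ m univ_nonempty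
  have hsmall : ∀ q ∈ univ.erase p₀, m q ^ 2 = m q := by
    intro q hq
    have hq₀ := h q p₀ (ne_of_mem_erase hq)
    have hle := hp₀ q (mem_univ q)
    have : m q ≤ 1 := by nlinarith
    interval_cases m q <;> rfl
  refine ⟨m p₀, ?_⟩
  rw [← add_sum_erase _ _ (mem_univ p₀), ← add_sum_erase _ _ (mem_univ p₀),
    sum_congr rfl hsmall]
  ring

section Length56

variable (G : Matrix (Fin 10) (Fin 56) (ZMod 2))

lemma walsh_sq_of_wt_eq_24_or_32 {v : Fin 10 → ZMod 2} (hv : wt (v ᵥ* G) = 24 ∨ wt (v ᵥ* G) = 32) :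
    walsh G v ^ 2 = 64 := by
  rw [walsh_eq, show hammingNorm (v ᵥ* G) = wt (v ᵥ* G) from rfl]
  rcases hv with h | h <;> rw [h] <;> norm_num

lemma pairCount_eq_of_walsh_sq (T : Finset (Fin 10 → ZMod 2))
    (hT : ∀ v, walsh G v ^ 2 = if v ∈ T then 3136 else 64) (x : Fin 10 → ZMod 2) :
    1024 * (pairCount G.col x : ℤ)
      = 64 * (if x = 0 then 1024 else 0) + 3072 * ∑ v ∈ T, chi (v ⬝ᵥ x) := by
  have hsplit : ∀ v, walsh G v ^ 2 * chi (v ⬝ᵥ x)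
      = 64 * chi (v ⬝ᵥ x) + 3072 * if v ∈ T then chi (v ⬝ᵥ x) else 0 := by
    intro v
    rw [hT]
    split_ifs <;> ring
  have h := sum_walsh_sq_mul_chi G x
  simp only [hsplit, sum_add_distrib, ← mul_sum, sum_chi_dotProduct,
    sum_ite_mem, univ_inter, Fintype.card_fin] at h
  rw [show (2 : ℤ) ^ 10 = 1024 by norm_num] at h
  exact h.symm

lemma not_forall_wt_eq_24_or_32 : ¬ ∀ v ≠ 0, wt (v ᵥ* G) = 24 ∨ wt (v ᵥ* G) = 32 := by
  intro hw
  have hT : ∀ v, walsh G v ^ 2 = if v ∈ ({0} : Finset _) then 3136 else 64 := by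
    intro v
    by_cases hv : v = 0
    · rw [if_pos (mem_singleton.2 hv), hv, walsh_zero]; rfl
    · rw [if_neg (mt mem_singleton.1 hv), walsh_sq_of_wt_eq_24_or_32 G (hw v hv)]
  have h := pairCount_eq_of_walsh_sq G _ hT 1
  rw [if_neg one_ne_zero, sum_singleton, zero_dotProduct, chi_zero] at h
  have h3 : pairCount G.col 1 = 3 := by omega
  have := even_pairCount G.col (one_ne_zero (α := Fin 10 → ZMod 2))
  rw [h3] at this
  exact Nat.not_even_iff_odd.2 (by decide) this

lemma not_forall_wt_eq_24_or_32_of_vecMul_eq_one {v₀ : Fin 10 → ZMod 2} (hv₀ : v₀ ᵥ* G = 1) :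
    ¬ ∀ v ≠ 0, v ≠ v₀ → wt (v ᵥ* G) = 24 ∨ wt (v ᵥ* G) = 32 := by
  intro hw
  have hv₀0 : v₀ ≠ 0 := by
    rintro rfl
    exact zero_ne_one (α := Fin 56 → ZMod 2) ((zero_vecMul G).symm.trans hv₀)
  have hT : ∀ v, walsh G v ^ 2 = if v ∈ ({0, v₀} : Finset _) then 3136 else 64 := by
    intro v
    by_cases hv : v = 0
    · rw [if_pos (by simp [hv]), hv, walsh_zero]; rfl
    by_cases hv' : v = v₀
    · rw [if_pos (by simp [hv']), hv', walsh_of_vecMul_eq_one hv₀]; rfl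
    · rw [if_neg (by simp [hv, hv']), walsh_sq_of_wt_eq_24_or_32 G (hw v hv hv')]
  have hQ : ∀ x, 1024 * (pairCount G.col x : ℤ)
      = 64 * (if x = 0 then 1024 else 0) + 3072 * (1 + chi (v₀ ⬝ᵥ x)) := by
    intro x
    rw [pairCount_eq_of_walsh_sq G _ hT, sum_pair hv₀0.symm, zero_dotProduct, chi_zero]
  have hQ0 : pairCount G.col 0 = 70 := by
    have h := hQ 0
    rw [if_pos rfl, dotProduct_zero, chi_zero] at h
    omega
  have hQ6 : ∀ x ≠ 0, v₀ ⬝ᵥ x = 0 → pairCount G.col x = 6 := by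
    intro x hx hx₀
    have h := hQ x
    rw [if_neg hx, hx₀, chi_zero] at h
    omega
  have hprod : ∀ p q, p ≠ q → mult G.col p * mult G.col q ≤ 3 := by
    intro p q hpq
    -- every column lies on the affine hyperplane `v₀ ⬝ᵥ p = 1`
    have hcol : ∀ i, v₀ ⬝ᵥ G.col i = 1 := fun i => congrFun hv₀ i
    by_cases hpq₁ : v₀ ⬝ᵥ p = 1 ∧ v₀ ⬝ᵥ q = 1
    · have hsum : p + q ≠ 0 := by
        rwa [← ZModModule.sub_eq_add, sub_ne_zero]
      have h := two_mul_mult_mul_mult_le_pairCount G.col hpq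
      rw [hQ6 _ hsum (by rw [dotProduct_add, hpq₁.1, hpq₁.2]; decide)] at h
      omega
    · have : mult G.col p = 0 ∨ mult G.col q = 0 := by
        simp only [mult_eq_zero_iff]
        grind
      rcases this with h | h <;> simp [h]
  obtain ⟨t, ht⟩ := exists_sum_sq_add_eq_sum_add_sq _ hprod
  rw [← pairCount_zero, hQ0, sum_mult, Fintype.card_fin] at ht
  have : t ≤ 14 := by nlinarith
  interval_cases t <;> omega

end Length56

end BinaryCode

open BinaryCode

theorem stmt15 (C : Submodule (ZMod 2) (Fin 56 → ZMod 2))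
    (hw : ∀ c ∈ C, c ≠ 0 → wt c = 24 ∨ wt c = 32 ∨ wt c = 56) :
    Module.finrank (ZMod 2) C ≤ 9 := by
  by_contra! hC
  obtain ⟨G, hGC, hG⟩ := Submodule.exists_matrix_of_le_finrank (k := 10) hC
  have hwG : ∀ v ≠ 0, wt (v ᵥ* G) = 24 ∨ wt (v ᵥ* G) = 32 ∨ v ᵥ* G = 1 := by
    intro v hv
    have hv' : v ᵥ* G ≠ 0 := fun h => hv (hG (h.trans (zero_vecMul G).symm))
    rcases hw _ (hGC v) hv' with h | h | h
    exacts [Or.inl h, Or.inr (Or.inl h), Or.inr (Or.inr (eq_one_of_hammingNorm_eq_card h))]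
  by_cases hone : ∃ v₀, v₀ ᵥ* G = 1
  · obtain ⟨v₀, hv₀⟩ := hone
    refine not_forall_wt_eq_24_or_32_of_vecMul_eq_one G hv₀ fun v hv hvv₀ => ?_
    exact (hwG v hv).imp_right (Or.resolve_right · fun h => hvv₀ (hG (h.trans hv₀.symm)))
  · push Not at hone
    exact not_forall_wt_eq_24_or_32 G fun v hv => (hwG v hv).imp_right (Or.resolve_right · (hone v))
end
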